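/- arXiv:1110.4657 — 2 statements merged into one kernel-verified Lean document; each statement's English description precedes it below -/
import Mathlib

section
/- Let M be a Markov chain on a finite state space X with everywhere-positive stationary distribution π, and let A, B be a complementary pair of subsets (A∩B = ∅, A∪B = X). Let U ⊆ X satisfy π(U∩A)/π(A) < ε < 1 and π(U∩B)/π(B) < δ < 1. Suppose λ₁ ≤ p_{b→A} ≤ κ₁ for all b ∈ B \ U and λ₂ ≤ p_{a→B} ≤ κ₂ for all a ∈ A \ U, with λ₂ > 0 and (1−ε)κ₂ + ε > 0. Then ((1−δ)λ₁)/((1−ε)κ₂ + ε) ≤ π(A)/π(B) ≤ ((1−δ)κ₁ + δ)/((1−ε)λ₂). -/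
/-!
Summing stationarity `∑ x, π x * p x y = π y` over `y ∉ A` shows that the stationary flow out of
`A` equals the flow back into it, `∑ a ∈ A, π a * p_{a→Aᶜ} = ∑ b ∈ Aᶜ, π b * p_{b→A}`; this is
`π(A) p_{A→B} = π(B) p_{B→A}` for the two-state lumped chain. Each side is a `π`-weighted sum of
numbers in `[0, 1]` that are controlled off `U`, and `U` carries less than an `ε` (resp. `δ`)
fraction of the mass of `A` (resp. `B`), so each flow is squeezed between explicit multiples of
`π(A)` and of `π(B)`. Comparing the two squeezes bounds `π(A) / π(B)` on both sides.
-/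

open Finset

section ExceptionalSet

variable {X : Type*} [DecidableEq X] {S U : Finset X} {w f : X → ℝ} {ε : ℝ}

theorem mul_sum_le_sum_mul_of_le_on_sdiff (hw : ∀ x ∈ S, 0 ≤ w x) (hf : ∀ x ∈ S, 0 ≤ f x)
    (hU : ∑ x ∈ U ∩ S, w x ≤ ε * ∑ x ∈ S, w x) (hε : ε ≤ 1) {lo : ℝ}
    (hlo : ∀ x ∈ S \ U, lo ≤ f x) :
    (1 - ε) * lo * ∑ x ∈ S, w x ≤ ∑ x ∈ S, w x * f x := by
  have hwf : ∀ x ∈ S, 0 ≤ w x * f x := fun x hx => mul_nonneg (hw x hx) (hf x hx)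
  rcases le_or_gt lo 0 with hlo0 | hlo0
  · calc (1 - ε) * lo * ∑ x ∈ S, w x ≤ 0 :=
          mul_nonpos_of_nonpos_of_nonneg (mul_nonpos_of_nonneg_of_nonpos (by linarith) hlo0)
            (sum_nonneg hw)
      _ ≤ ∑ x ∈ S, w x * f x := sum_nonneg hwf
  have hsplit : ∑ x ∈ S ∩ U, w x + ∑ x ∈ S \ U, w x = ∑ x ∈ S, w x :=
    sum_inter_add_sum_sdiff S U w
  rw [inter_comm] at hsplit
  calc (1 - ε) * lo * ∑ x ∈ S, w x = lo * ((1 - ε) * ∑ x ∈ S, w x) := by ring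
    _ ≤ lo * ∑ x ∈ S \ U, w x := mul_le_mul_of_nonneg_left (by linarith) hlo0.le
    _ = ∑ x ∈ S \ U, w x * lo := by rw [mul_comm, sum_mul]
    _ ≤ ∑ x ∈ S \ U, w x * f x :=
        sum_le_sum fun x hx => mul_le_mul_of_nonneg_left (hlo x hx) (hw x (sdiff_subset hx))
    _ ≤ ∑ x ∈ S, w x * f x := sum_le_sum_of_subset_of_nonneg sdiff_subset fun x hx _ => hwf x hx

theorem sum_mul_le_mul_sum_of_le_on_sdiff (hw : ∀ x ∈ S, 0 ≤ w x) (hf : ∀ x ∈ S, f x ≤ 1)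
    (hU : ∑ x ∈ U ∩ S, w x ≤ ε * ∑ x ∈ S, w x) (hε : ε ≤ 1) {hi : ℝ}
    (hhi : ∀ x ∈ S \ U, f x ≤ hi) :
    ∑ x ∈ S, w x * f x ≤ ((1 - ε) * hi + ε) * ∑ x ∈ S, w x := by
  have h := mul_sum_le_sum_mul_of_le_on_sdiff (f := fun x => 1 - f x) (lo := 1 - hi) hw
    (fun x hx => sub_nonneg.2 (hf x hx)) hU hε (fun x hx => by linarith [hhi x hx])
  simp only [mul_sub, mul_one, sum_sub_distrib] at h
  linarith

end ExceptionalSet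

section StationaryFlow

variable {X : Type*} [Fintype X] {p : X → X → ℝ} {π : X → ℝ}

theorem sum_le_one_of_stochastic (hnn : ∀ x y, 0 ≤ p x y) (hrow : ∀ x, ∑ y, p x y = 1) (x : X)
    (B : Finset X) : ∑ y ∈ B, p x y ≤ 1 :=
  hrow x ▸ sum_le_univ_sum_of_nonneg (hnn x)

variable [DecidableEq X]

theorem stationary_flow_out_eq_flow_in (hrow : ∀ x, ∑ y, p x y = 1)
    (hstat : ∀ y, ∑ x, π x * p x y = π y) (A : Finset X) :
    ∑ a ∈ A, π a * ∑ b ∈ Aᶜ, p a b = ∑ b ∈ Aᶜ, π b * ∑ a ∈ A, p b a := by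
  have hinto : ∑ x, π x * ∑ b ∈ Aᶜ, p x b = ∑ b ∈ Aᶜ, π b := by
    simp only [mul_sum]
    rw [sum_comm]
    exact sum_congr rfl fun b _ => hstat b
  have hstay : ∑ b ∈ Aᶜ, π b * ∑ c ∈ Aᶜ, p b c
      = ∑ b ∈ Aᶜ, π b - ∑ b ∈ Aᶜ, π b * ∑ a ∈ A, p b a := by
    rw [← sum_sub_distrib]
    refine sum_congr rfl fun b _ => ?_
    linear_combination π b * (sum_add_sum_compl A (p b) |>.trans (hrow b))
  rw [← sum_add_sum_compl A, hstay] at hinto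
  linarith

end StationaryFlow

theorem stmt12_general {X : Type*} [Fintype X] [DecidableEq X]
    (p : X → X → ℝ) (hnn : ∀ x y, 0 ≤ p x y) (hrow : ∀ x, ∑ y, p x y = 1)
    (π : X → ℝ) (hpos : ∀ x, 0 < π x)
    (hstat : ∀ y, ∑ x, π x * p x y = π y)
    (A U : Finset X) (hA : A.Nonempty) (hB : Aᶜ.Nonempty)
    (ε δ lam₁ κ₁ lam₂ κ₂ : ℝ)
    (hεA : (∑ x ∈ U ∩ A, π x) / (∑ x ∈ A, π x) < ε) (hε1 : ε < 1)
    (hδB : (∑ x ∈ U ∩ Aᶜ, π x) / (∑ x ∈ Aᶜ, π x) < δ) (hδ1 : δ < 1)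
    (h₁ : ∀ b ∈ Aᶜ \ U, lam₁ ≤ ∑ a ∈ A, p b a ∧ ∑ a ∈ A, p b a ≤ κ₁)
    (h₂ : ∀ a ∈ A \ U, lam₂ ≤ ∑ b ∈ Aᶜ, p a b ∧ ∑ b ∈ Aᶜ, p a b ≤ κ₂)
    (hlam₂ : 0 < lam₂) (hden : 0 < (1 - ε) * κ₂ + ε) :
    ((1 - δ) * lam₁) / ((1 - ε) * κ₂ + ε) ≤ (∑ a ∈ A, π a) / (∑ b ∈ Aᶜ, π b) ∧
      (∑ a ∈ A, π a) / (∑ b ∈ Aᶜ, π b) ≤ ((1 - δ) * κ₁ + δ) / ((1 - ε) * lam₂) := by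
  have hPA : 0 < ∑ a ∈ A, π a := sum_pos (fun x _ => hpos x) hA
  have hPB : 0 < ∑ b ∈ Aᶜ, π b := sum_pos (fun x _ => hpos x) hB
  have hw : ∀ {S : Finset X}, ∀ x ∈ S, 0 ≤ π x := fun x _ => (hpos x).le
  have hUA := ((div_lt_iff₀ hPA).1 hεA).le
  have hUB := ((div_lt_iff₀ hPB).1 hδB).le
  have hflow := stationary_flow_out_eq_flow_in hrow hstat A
  have hout_lo := mul_sum_le_sum_mul_of_le_on_sdiff hw
    (fun x _ => sum_nonneg fun y _ => hnn x y) hUA hε1.le fun a ha => (h₂ a ha).1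
  have hout_hi := sum_mul_le_mul_sum_of_le_on_sdiff hw
    (fun x _ => sum_le_one_of_stochastic hnn hrow x _) hUA hε1.le fun a ha => (h₂ a ha).2
  have hin_lo := mul_sum_le_sum_mul_of_le_on_sdiff hw
    (fun x _ => sum_nonneg fun y _ => hnn x y) hUB hδ1.le fun b hb => (h₁ b hb).1
  have hin_hi := sum_mul_le_mul_sum_of_le_on_sdiff hw
    (fun x _ => sum_le_one_of_stochastic hnn hrow x _) hUB hδ1.le fun b hb => (h₁ b hb).2
  constructor
  · rw [div_le_div_iff₀ hden hPB]
    linarith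
  · rw [div_le_div_iff₀ hPB (mul_pos (by linarith) hlam₂)]
    linarith

/-- Estimating the ratio of stationary probabilities of a complementary pair
A, B = Aᶜ via the two-state lumping and the bounds on individual transition
probabilities outside a small exceptional set U. -/
theorem stmt12 {X : Type*} [Fintype X] [DecidableEq X]
    (p : X → X → ℝ) (hnn : ∀ x y, 0 ≤ p x y) (hrow : ∀ x, ∑ y, p x y = 1)
    (π : X → ℝ) (hpos : ∀ x, 0 < π x) (hsum : ∑ x, π x = 1)
    (hstat : ∀ y, ∑ x, π x * p x y = π y)
    (A U : Finset X) (hA : A.Nonempty) (hB : Aᶜ.Nonempty)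
    (ε δ lam₁ κ₁ lam₂ κ₂ : ℝ)
    (hεA : (∑ x ∈ U ∩ A, π x) / (∑ x ∈ A, π x) < ε) (hε1 : ε < 1)
    (hδB : (∑ x ∈ U ∩ Aᶜ, π x) / (∑ x ∈ Aᶜ, π x) < δ) (hδ1 : δ < 1)
    (h₁ : ∀ b ∈ Aᶜ \ U, lam₁ ≤ ∑ a ∈ A, p b a ∧ ∑ a ∈ A, p b a ≤ κ₁)
    (h₂ : ∀ a ∈ A \ U, lam₂ ≤ ∑ b ∈ Aᶜ, p a b ∧ ∑ b ∈ Aᶜ, p a b ≤ κ₂)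
    (hlam₂ : 0 < lam₂) (hden : 0 < (1 - ε) * κ₂ + ε) :
    ((1 - δ) * lam₁) / ((1 - ε) * κ₂ + ε) ≤ (∑ a ∈ A, π a) / (∑ b ∈ Aᶜ, π b) ∧
      (∑ a ∈ A, π a) / (∑ b ∈ Aᶜ, π b) ≤ ((1 - δ) * κ₁ + δ) / ((1 - ε) * lam₂) :=
  stmt12_general p hnn hrow π hpos hstat A U hA hB ε δ lam₁ κ₁ lam₂ κ₂ hεA hε1 hδB hδ1 h₁ h₂ hlam₂
    hden
end

section
/- Under the setting of the finite-population Geiringer theorem (the stationary distribution is uniform on the orbit [x]) and the additional assumption that all transpositions of individuals within a population belong to the generating family S, the limiting frequency of occurrence of a subset S ⊆ Ω satisfies lim_{t→∞} Φ(S, x, t) = |𝒱(x, S)| / |[x]|, where 𝒱(x, S) = {y = (y₁,…,y_b) ∈ [x] : y₁ ∈ S} is the set of populations in the orbit whose first individual lies in S. -/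
/-!
Since the orbit is closed under transpositions of individuals, swapping positions `0` and `j`
shows that every position holds an element of `S` in exactly as many populations of the orbit as
the first one; summing over positions, the uniform average of the number of individuals in `S`
is `b * |𝒱(x,S)| / |[x]|`. The distributions converge to the uniform one on the finite orbit,
so the expected counts converge to that average, and hence so do their Cesàro means.
-/

open Filter Finset

section SwapInvariant

variable {ι Ω : Type*} [DecidableEq ι] {E : Finset (ι → Ω)} (p : Ω → Prop) [DecidablePred p]

theorem card_filter_apply_eq_of_swap_mem (hswap : ∀ v ∈ E, ∀ i j : ι, v ∘ Equiv.swap i j ∈ E)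
    (i j : ι) : #{v ∈ E | p (v i)} = #{v ∈ E | p (v j)} := by
  apply card_nbij' (· ∘ Equiv.swap i j) (· ∘ Equiv.swap i j)
  · intro v hv
    simp only [coe_filter, Set.mem_ofPred_eq] at hv ⊢
    exact ⟨hswap v hv.1 i j, by simpa using hv.2⟩
  · intro v hv
    simp only [coe_filter, Set.mem_ofPred_eq] at hv ⊢
    exact ⟨hswap v hv.1 i j, by simpa using hv.2⟩
  · intro v _; ext k; simp
  · intro v _; ext k; simp

theorem sum_card_filter_apply_eq_of_swap_mem [Fintype ι]
    (hswap : ∀ v ∈ E, ∀ i j : ι, v ∘ Equiv.swap i j ∈ E) (i : ι) :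
    ∑ v ∈ E, #{j | p (v j)} = Fintype.card ι * #{v ∈ E | p (v i)} := by
  simp_rw [card_filter]
  rw [sum_comm]
  simp_rw [← card_filter, card_filter_apply_eq_of_swap_mem p hswap _ i]
  simp

end SwapInvariant

theorem tendsto_apply_of_tendsto_sum_abs_sub {α : Type*} {E : Finset α} {d : ℕ → α → ℝ}
    {c : α → ℝ} (h : Tendsto (fun n => ∑ v ∈ E, |d n v - c v|) atTop (nhds 0)) {v : α}
    (hv : v ∈ E) : Tendsto (fun n => d n v) atTop (nhds (c v)) := by
  rw [← tendsto_sub_nhds_zero_iff]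
  refine squeeze_zero_norm (fun n => ?_) h
  exact single_le_sum (f := fun v => |d n v - c v|) (fun _ _ => abs_nonneg _) hv

theorem tendsto_sum_mul_of_tendsto_sum_abs_sub {α : Type*} {E : Finset α} {d : ℕ → α → ℝ}
    {c : α → ℝ} (h : Tendsto (fun n => ∑ v ∈ E, |d n v - c v|) atTop (nhds 0)) (g : α → ℝ) :
    Tendsto (fun n => ∑ v ∈ E, d n v * g v) atTop (nhds (∑ v ∈ E, c v * g v)) :=
  tendsto_finsetSum E fun _ hv => (tendsto_apply_of_tendsto_sum_abs_sub h hv).mul_const _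

theorem stmt18_general {Ω : Type*} [DecidableEq Ω] (b : ℕ) (hb : 0 < b)
    (S : Finset Ω)
    (E : Finset (Fin b → Ω))
    (hswap : ∀ v ∈ E, ∀ i j : Fin b, (v ∘ Equiv.swap i j) ∈ E)
    (d : ℕ → (Fin b → Ω) → ℝ)
    (hconv : Tendsto (fun n => ∑ v ∈ E, |d n v - 1 / (E.card : ℝ)|)
      atTop (nhds 0)) :
    Tendsto
      (fun t : ℕ => (∑ i ∈ Finset.range t, ∑ v ∈ E,
          d i v * ((Finset.univ.filter (fun j : Fin b => v j ∈ S)).card : ℝ)) /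
        ((b : ℝ) * t))
      atTop
      (nhds (((E.filter (fun v => v ⟨0, hb⟩ ∈ S)).card : ℝ) / (E.card : ℝ))) := by
  have hcount : ∑ v ∈ E, (#{j | v j ∈ S} : ℝ) = b * #{v ∈ E | v ⟨0, hb⟩ ∈ S} := by
    have := sum_card_filter_apply_eq_of_swap_mem (· ∈ S) hswap ⟨0, hb⟩
    rw [Fintype.card_fin] at this
    exact_mod_cast this
  have hlim := ((tendsto_sum_mul_of_tendsto_sum_abs_sub hconv
    fun v => (#{j | v j ∈ S} : ℝ)).cesaro).const_mul (b : ℝ)⁻¹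
  rw [← mul_sum, hcount] at hlim
  convert hlim using 2 with t
  · rw [div_eq_mul_inv, mul_inv, mul_comm, mul_assoc]
  · field_simp

/-- Geiringer-like frequency formula: if the orbit E of populations is closed
under coordinate transpositions and the distributions of the process converge
(in L¹) to the uniform distribution on E, then the limiting frequency of
occurrence of individuals from S ⊆ Ω equals |𝒱(x,S)|/|E|, where 𝒱(x,S) is the
set of populations in E whose first individual lies in S. -/
theorem stmt18 {Ω : Type*} [Fintype Ω] [DecidableEq Ω] (b : ℕ) (hb : 0 < b)
    (S : Finset Ω)
    (E : Finset (Fin b → Ω)) (hE : E.Nonempty)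
    (hswap : ∀ v ∈ E, ∀ i j : Fin b, (v ∘ Equiv.swap i j) ∈ E)
    (d : ℕ → (Fin b → Ω) → ℝ)
    (hd0 : ∀ n v, 0 ≤ d n v) (hd1 : ∀ n, ∑ v ∈ E, d n v = 1)
    (hsupp : ∀ n v, v ∉ E → d n v = 0)
    (hconv : Tendsto (fun n => ∑ v ∈ E, |d n v - 1 / (E.card : ℝ)|)
      atTop (nhds 0)) :
    Tendsto
      (fun t : ℕ => (∑ i ∈ Finset.range t, ∑ v ∈ E,
          d i v * ((Finset.univ.filter (fun j : Fin b => v j ∈ S)).card : ℝ)) /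
        ((b : ℝ) * t))
      atTop
      (nhds (((E.filter (fun v => v ⟨0, hb⟩ ∈ S)).card : ℝ) / (E.card : ℝ))) :=
  stmt18_general b hb S E hswap d hconv
end
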